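/- arXiv:2506.19034 — 5 statements merged into one kernel-verified Lean document; each statement's English description precedes it below -/
import Mathlib

section
/- Assume (H1), (H2⁰) and K·L < α. Then the fixed points φ*_τ(ξ) satisfy the invariance identity φ*_τ(ξ) = φ*_r(Φ(r,τ)ξ) for all τ, r ∈ I and all ξ ∈ X. -/
open Set MeasureTheory Real

lemma integral_evolution_rebase {X : Type*} [NormedAddCommGroup X] [NormedSpace ℝ X]
    {τ₀ : ℝ} {Φ : ℝ → ℝ → X →L[ℝ] X}
    (hΦcomp : ∀ t ∈ Ici τ₀, ∀ r ∈ Ici τ₀, ∀ s ∈ Ici τ₀, Φ t s = (Φ t r).comp (Φ r s))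
    (F : ℝ → X → X) (ψ : ℝ → X) {τ r t : ℝ} (hτ : τ ∈ Ici τ₀) (hr : r ∈ Ici τ₀)
    (ht : t ∈ Ici τ₀) (ξ : X) :
    ∫ s in τ₀..t, Φ t s (F s (ψ s + Φ s τ ξ)) =
      ∫ s in τ₀..t, Φ t s (F s (ψ s + Φ s r (Φ r τ ξ))) := by
  refine intervalIntegral.integral_congr fun s hs => ?_
  rw [uIcc_of_le (mem_Ici.mp ht)] at hs
  simp only [hΦcomp s hs.1 r hr τ hτ, ContinuousLinearMap.comp_apply]

theorem statement4_general
    {X : Type*} [NormedAddCommGroup X] [NormedSpace ℝ X]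
    (τ₀ : ℝ)
    (Nt : ℝ → X → ℝ)
    (Φ : ℝ → ℝ → X →L[ℝ] X)
    (hΦcomp : ∀ t ∈ Set.Ici τ₀, ∀ r ∈ Set.Ici τ₀, ∀ s ∈ Set.Ici τ₀,
      Φ t s = (Φ t r).comp (Φ r s))
    (F : ℝ → X → X)
    (L : ℝ)
    (φstar : ℝ → X → ℝ → X)
    (hφstarBC : ∀ τ ∈ Set.Ici τ₀, ∀ ξ : X, ContinuousOn (φstar τ ξ) (Set.Ici τ₀) ∧
      ∃ C : ℝ, ∀ t ∈ Set.Ici τ₀, Nt t (φstar τ ξ t) ≤ C)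
    (hφstarFix : ∀ τ ∈ Set.Ici τ₀, ∀ ξ : X, ∀ t ∈ Set.Ici τ₀,
      φstar τ ξ t = ∫ s in τ₀..t, Φ t s (F s (φstar τ ξ s + Φ s τ ξ)))
    (hφstarUniq : ∀ τ ∈ Set.Ici τ₀, ∀ ξ : X, ∀ ψ : ℝ → X, ContinuousOn ψ (Set.Ici τ₀) →
      (∃ C : ℝ, ∀ t ∈ Set.Ici τ₀, Nt t (ψ t) ≤ C) →
      (∀ t ∈ Set.Ici τ₀, ψ t = ∫ s in τ₀..t, Φ t s (F s (ψ s + Φ s τ ξ))) →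
      ∀ t ∈ Set.Ici τ₀, ψ t = φstar τ ξ t)
    :
    ∀ τ ∈ Set.Ici τ₀, ∀ r ∈ Set.Ici τ₀, ∀ ξ : X, ∀ t ∈ Set.Ici τ₀,
      φstar τ ξ t = φstar r (Φ r τ ξ) t := by
  intro τ hτ r hr ξ
  obtain ⟨hcont, hbdd⟩ := hφstarBC τ hτ ξ
  refine hφstarUniq r hr (Φ r τ ξ) (φstar τ ξ) hcont hbdd fun t ht => ?_
  rw [hφstarFix τ hτ ξ t ht, integral_evolution_rebase hΦcomp F _ hτ hr ht]

theorem statement4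
    {X : Type*} [NormedAddCommGroup X] [NormedSpace ℝ X] [CompleteSpace X]
    (τ₀ : ℝ)
    (Nt : ℝ → X → ℝ)
    (hNadd : ∀ t : ℝ, ∀ x y : X, Nt t (x + y) ≤ Nt t x + Nt t y)
    (hNsmul : ∀ t : ℝ, ∀ c : ℝ, ∀ x : X, Nt t (c • x) = |c| * Nt t x)
    (ℓ : ℝ → ℝ)
    (hℓpos : ∀ t ∈ Set.Ici τ₀, 0 < ℓ t)
    (hℓloc : ∀ a b : ℝ, ∃ C : ℝ, ∀ t ∈ Set.Icc a b ∩ Set.Ici τ₀, ℓ t ≤ C)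
    (hNequiv : ∀ t ∈ Set.Ici τ₀, ∀ x : X, (1 / ℓ t) * ‖x‖ ≤ Nt t x ∧ Nt t x ≤ ℓ t * ‖x‖)
    (Φ : ℝ → ℝ → X →L[ℝ] X)
    (hΦcont : ContinuousOn (fun p : ℝ × ℝ => Φ p.1 p.2) (Set.Ici τ₀ ×ˢ Set.Ici τ₀))
    (hΦid : ∀ t ∈ Set.Ici τ₀, Φ t t = ContinuousLinearMap.id ℝ X)
    (hΦcomp : ∀ t ∈ Set.Ici τ₀, ∀ r ∈ Set.Ici τ₀, ∀ s ∈ Set.Ici τ₀,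
      Φ t s = (Φ t r).comp (Φ r s))
    (K α : ℝ) (hK : 1 ≤ K) (hα : 0 < α)
    (hH1 : ∀ s ∈ Set.Ici τ₀, ∀ t ∈ Set.Ici τ₀, s ≤ t → ∀ x : X,
      Nt t (Φ t s x) ≤ K * Real.exp (-α * (t - s)) * Nt s x)
    (F : ℝ → X → X)
    (hFmeas : ∀ x : X, StronglyMeasurable (fun t => F t x))
    (hFcont : ∀ᵐ t ∂(volume.restrict (Set.Ici τ₀)), Continuous (F t))
    (L M : ℝ) (hL : 0 ≤ L) (hM : 0 ≤ M)
    (hH2 : ∀ᵐ t ∂(volume.restrict (Set.Ici τ₀)),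
      F t 0 = 0 ∧ (∀ x : X, Nt t (F t x) ≤ M) ∧
        (∀ x y : X, Nt t (F t x - F t y) ≤ L * Nt t (x - y)))
    (hKL : K * L < α)
    (φstar : ℝ → X → ℝ → X)
    (hφstarBC : ∀ τ ∈ Set.Ici τ₀, ∀ ξ : X, ContinuousOn (φstar τ ξ) (Set.Ici τ₀) ∧
      ∃ C : ℝ, ∀ t ∈ Set.Ici τ₀, Nt t (φstar τ ξ t) ≤ C)
    (hφstarFix : ∀ τ ∈ Set.Ici τ₀, ∀ ξ : X, ∀ t ∈ Set.Ici τ₀,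
      φstar τ ξ t = ∫ s in τ₀..t, Φ t s (F s (φstar τ ξ s + Φ s τ ξ)))
    (hφstarUniq : ∀ τ ∈ Set.Ici τ₀, ∀ ξ : X, ∀ ψ : ℝ → X, ContinuousOn ψ (Set.Ici τ₀) →
      (∃ C : ℝ, ∀ t ∈ Set.Ici τ₀, Nt t (ψ t) ≤ C) →
      (∀ t ∈ Set.Ici τ₀, ψ t = ∫ s in τ₀..t, Φ t s (F s (ψ s + Φ s τ ξ))) →
      ∀ t ∈ Set.Ici τ₀, ψ t = φstar τ ξ t)
    :
    ∀ τ ∈ Set.Ici τ₀, ∀ r ∈ Set.Ici τ₀, ∀ ξ : X, ∀ t ∈ Set.Ici τ₀,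
      φstar τ ξ t = φstar r (Φ r τ ξ) t :=
  statement4_general τ₀ Nt Φ hΦcomp F L φstar hφstarBC hφstarFix hφstarUniq
end

section
/- Assume (H1), (H2⁰) and K·L < α. Then the maps H and G are near the identity: ‖H(t,ξ) − ξ‖_t ≤ K·M/α and ‖G(t,η) − η‖_t ≤ K·M/α for all t ∈ I and all ξ, η ∈ X. -/
open Set MeasureTheory Real

/-!
The fixed-point equation for `φ*` and the definition of `G` express both `H(t, ξ) - ξ` and
`G(t, η) - η` as (up to sign) a Duhamel integral `∫_{τ₀}^t Φ(t,s) u(s) ds` with `‖u(s)‖_s ≤ M`.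
By (H1) its integrand has `‖·‖_t`-size at most `K M e^{-α(t-s)}`, whose integral over `[τ₀, t]`
is at most `K M / α`. Since `‖·‖_t` is not the norm of `X`, it is moved under the integral with a
Hahn–Banach functional that is dominated by `‖·‖_t` and attains it at the integral.
-/

theorem integral_exp_neg_mul_sub_le (a t : ℝ) {α : ℝ} (hα : 0 < α) :
    ∫ s in a..t, exp (-α * (t - s)) ≤ 1 / α := by
  have hderiv : ∀ s ∈ uIcc a t,
      HasDerivAt (fun s => exp (-α * (t - s)) / α) (exp (-α * (t - s))) s := by
    intro s _
    refine ((((hasDerivAt_id s).const_sub t).const_mul (-α)).exp.div_const α).congr_deriv ?_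
    field_simp
    simp
  rw [intervalIntegral.integral_eq_sub_of_hasDerivAt hderiv
    ((by fun_prop : Continuous fun s => exp (-α * (t - s))).intervalIntegrable _ _)]
  have : 0 < exp (-α * (t - a)) / α := by positivity
  simp only [sub_self, mul_zero, exp_zero]
  linarith

namespace Seminorm

variable {E : Type*} [NormedAddCommGroup E] [NormedSpace ℝ E]

theorem continuous_of_le_mul_norm (p : Seminorm ℝ E) (C : ℝ) (hpC : ∀ x, p x ≤ C * ‖x‖) :
    Continuous p := by
  refine Seminorm.continuous_of_continuousAt_zero ?_
  have hC : Filter.Tendsto (fun x : E => C * ‖x‖) (nhds 0) (nhds 0) :=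
    Continuous.tendsto' (by fun_prop) 0 0 (by simp)
  simpa [ContinuousAt] using squeeze_zero (fun x => apply_nonneg p x) hpC hC

theorem exists_strongDual_apply_eq (p : Seminorm ℝ E) (hp : Continuous p) (v : E) :
    ∃ φ : StrongDual ℝ E, φ v = p v ∧ ∀ x, φ x ≤ p x := by
  rcases eq_or_ne v 0 with rfl | hv
  · exact ⟨0, by simp, fun x => by simp⟩
  let c := LinearEquiv.coord ℝ E v hv
  have hfp : ∀ y : ℝ ∙ v, (p v • c.toLinearMap) y ≤ p y := by
    intro y
    rw [← LinearEquiv.coord_apply_smul ℝ E v hv y, map_smul_eq_mul, Real.norm_eq_abs]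
    simpa [mul_comm] using mul_le_mul_of_nonneg_right (le_abs_self (c y)) (apply_nonneg p v)
  obtain ⟨φ, hφf, hφp⟩ :=
    Module.Dual.exists_continuous_extension_of_le_seminorm_real _ _ hp hfp
  refine ⟨φ, ?_, fun x => (le_abs_self _).trans (hφp x)⟩
  simpa [c, LinearEquiv.coord_self] using hφf ⟨v, Submodule.mem_span_singleton_self v⟩

theorem map_integral_le_of_ae_le {α : Type*} [MeasurableSpace α] {μ : Measure α}
    (p : Seminorm ℝ E) (hp : Continuous p) {f : α → E} {g : α → ℝ} (hg : Integrable g μ)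
    (hfg : ∀ᵐ a ∂μ, p (f a) ≤ g a) : p (∫ a, f a ∂μ) ≤ ∫ a, g a ∂μ := by
  by_cases hf : CompleteSpace E ∧ Integrable f μ
  · obtain ⟨_, hf⟩ := hf
    obtain ⟨φ, hφv, hφp⟩ := p.exists_strongDual_apply_eq hp (∫ a, f a ∂μ)
    calc p (∫ a, f a ∂μ) = ∫ a, φ (f a) ∂μ := by rw [← hφv, φ.integral_comp_comm hf]
      _ ≤ ∫ a, g a ∂μ :=
        integral_mono_ae (φ.integrable_comp hf) hg (hfg.mono fun a ha => (hφp _).trans ha)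
  · have hzero : ∫ a, f a ∂μ = 0 := by
      rcases not_and_or.mp hf with hE | hf
      exacts [integral_of_not_completeSpace hE, integral_undef hf]
    rw [hzero, map_zero]
    exact integral_nonneg_of_ae (hfg.mono fun a ha => (apply_nonneg p _).trans ha)

theorem map_duhamel_integral_le
    (p : ℝ → Seminorm ℝ E) (Φ : ℝ → ℝ → E →L[ℝ] E) (u : ℝ → E)
    {τ₀ t K α M : ℝ} (hτ₀t : τ₀ ≤ t) (hpt : Continuous (p t)) (hK : 0 ≤ K) (hα : 0 < α)
    (hM : 0 ≤ M) (hΦ : ∀ s ∈ Ioc τ₀ t, ∀ x, p t (Φ t s x) ≤ K * exp (-α * (t - s)) * p s x)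
    (hu : ∀ᵐ s ∂volume.restrict (Ioc τ₀ t), p s (u s) ≤ M) :
    p t (∫ s in τ₀..t, Φ t s (u s)) ≤ K * M / α := by
  have hpointwise : ∀ᵐ s ∂volume.restrict (Ioc τ₀ t),
      p t (Φ t s (u s)) ≤ K * M * exp (-α * (t - s)) := by
    filter_upwards [hu, ae_restrict_mem measurableSet_Ioc] with s hus hs
    calc p t (Φ t s (u s)) ≤ K * exp (-α * (t - s)) * p s (u s) := hΦ s hs _
      _ ≤ K * exp (-α * (t - s)) * M := by gcongr
      _ = K * M * exp (-α * (t - s)) := by ring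
  have hint : IntegrableOn (fun s => K * M * exp (-α * (t - s))) (Ioc τ₀ t) :=
    (by fun_prop : Continuous fun s => K * M * exp (-α * (t - s))).integrableOn_Icc.mono_set
      Ioc_subset_Icc_self
  calc p t (∫ s in τ₀..t, Φ t s (u s))
      ≤ ∫ s in τ₀..t, K * M * exp (-α * (t - s)) := by
        rw [intervalIntegral.integral_of_le hτ₀t, intervalIntegral.integral_of_le hτ₀t]
        exact (p t).map_integral_le_of_ae_le hpt hint hpointwise
    _ = K * M * ∫ s in τ₀..t, exp (-α * (t - s)) := intervalIntegral.integral_const_mul _ _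
    _ ≤ K * M * (1 / α) := by
        gcongr
        exact integral_exp_neg_mul_sub_le τ₀ t hα
    _ = K * M / α := by ring

end Seminorm

theorem statement5_general
    {X : Type*} [NormedAddCommGroup X] [NormedSpace ℝ X]
    (τ₀ : ℝ)
    (Nt : ℝ → X → ℝ)
    (hNadd : ∀ t : ℝ, ∀ x y : X, Nt t (x + y) ≤ Nt t x + Nt t y)
    (hNsmul : ∀ t : ℝ, ∀ c : ℝ, ∀ x : X, Nt t (c • x) = |c| * Nt t x)
    (ℓ : ℝ → ℝ)
    (hNequiv : ∀ t ∈ Set.Ici τ₀, ∀ x : X, (1 / ℓ t) * ‖x‖ ≤ Nt t x ∧ Nt t x ≤ ℓ t * ‖x‖)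
    (Φ : ℝ → ℝ → X →L[ℝ] X)
    (K α : ℝ) (hK : 1 ≤ K) (hα : 0 < α)
    (hH1 : ∀ s ∈ Set.Ici τ₀, ∀ t ∈ Set.Ici τ₀, s ≤ t → ∀ x : X,
      Nt t (Φ t s x) ≤ K * Real.exp (-α * (t - s)) * Nt s x)
    (F : ℝ → X → X)
    (L M : ℝ) (hM : 0 ≤ M)
    (hH2 : ∀ᵐ t ∂(volume.restrict (Set.Ici τ₀)),
      F t 0 = 0 ∧ (∀ x : X, Nt t (F t x) ≤ M) ∧
        (∀ x y : X, Nt t (F t x - F t y) ≤ L * Nt t (x - y)))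
    (sol : ℝ → ℝ → X → X)
    (φstar : ℝ → X → ℝ → X)
    (hφstarFix : ∀ τ ∈ Set.Ici τ₀, ∀ ξ : X, ∀ t ∈ Set.Ici τ₀,
      φstar τ ξ t = ∫ s in τ₀..t, Φ t s (F s (φstar τ ξ s + Φ s τ ξ)))    :
    (∀ t ∈ Set.Ici τ₀, ∀ ξ : X, Nt t ((ξ + φstar t ξ t) - ξ) ≤ K * M / α) ∧
    (∀ t ∈ Set.Ici τ₀, ∀ η : X,
      Nt t ((η - ∫ s in τ₀..t, Φ t s (F s (sol s t η))) - η) ≤ K * M / α) := by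
  let p : ℝ → Seminorm ℝ X := fun t =>
    Seminorm.of (Nt t) (hNadd t) fun c x => by rw [hNsmul, Real.norm_eq_abs]
  have hduhamel : ∀ t ∈ Ici τ₀, ∀ w : ℝ → X,
      Nt t (∫ s in τ₀..t, Φ t s (F s (w s))) ≤ K * M / α := fun t ht w =>
    Seminorm.map_duhamel_integral_le p Φ _ ht
      ((p t).continuous_of_le_mul_norm (ℓ t) fun x => (hNequiv t ht x).2) (by linarith) hα hM
      (fun s hs x => hH1 s hs.1.le t ht hs.2 x)
      (ae_restrict_of_ae_restrict_of_subset (Ioc_subset_Ioi_self.trans Ioi_subset_Ici_self)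
        (hH2.mono fun s hs => hs.2.1 _))
  refine ⟨fun t ht ξ => ?_, fun t ht η => ?_⟩
  · rw [add_sub_cancel_left, hφstarFix t ht ξ t ht]
    exact hduhamel t ht _
  · rw [sub_sub_cancel_left, ← neg_one_smul ℝ, hNsmul, abs_neg, abs_one, one_mul]
    exact hduhamel t ht _

theorem statement5
    {X : Type*} [NormedAddCommGroup X] [NormedSpace ℝ X] [CompleteSpace X]
    (τ₀ : ℝ)
    (Nt : ℝ → X → ℝ)
    (hNadd : ∀ t : ℝ, ∀ x y : X, Nt t (x + y) ≤ Nt t x + Nt t y)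
    (hNsmul : ∀ t : ℝ, ∀ c : ℝ, ∀ x : X, Nt t (c • x) = |c| * Nt t x)
    (ℓ : ℝ → ℝ)
    (hℓpos : ∀ t ∈ Set.Ici τ₀, 0 < ℓ t)
    (hℓloc : ∀ a b : ℝ, ∃ C : ℝ, ∀ t ∈ Set.Icc a b ∩ Set.Ici τ₀, ℓ t ≤ C)
    (hNequiv : ∀ t ∈ Set.Ici τ₀, ∀ x : X, (1 / ℓ t) * ‖x‖ ≤ Nt t x ∧ Nt t x ≤ ℓ t * ‖x‖)
    (Φ : ℝ → ℝ → X →L[ℝ] X)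
    (hΦcont : ContinuousOn (fun p : ℝ × ℝ => Φ p.1 p.2) (Set.Ici τ₀ ×ˢ Set.Ici τ₀))
    (hΦid : ∀ t ∈ Set.Ici τ₀, Φ t t = ContinuousLinearMap.id ℝ X)
    (hΦcomp : ∀ t ∈ Set.Ici τ₀, ∀ r ∈ Set.Ici τ₀, ∀ s ∈ Set.Ici τ₀,
      Φ t s = (Φ t r).comp (Φ r s))
    (K α : ℝ) (hK : 1 ≤ K) (hα : 0 < α)
    (hH1 : ∀ s ∈ Set.Ici τ₀, ∀ t ∈ Set.Ici τ₀, s ≤ t → ∀ x : X,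
      Nt t (Φ t s x) ≤ K * Real.exp (-α * (t - s)) * Nt s x)
    (F : ℝ → X → X)
    (hFmeas : ∀ x : X, StronglyMeasurable (fun t => F t x))
    (hFcont : ∀ᵐ t ∂(volume.restrict (Set.Ici τ₀)), Continuous (F t))
    (L M : ℝ) (hL : 0 ≤ L) (hM : 0 ≤ M)
    (hH2 : ∀ᵐ t ∂(volume.restrict (Set.Ici τ₀)),
      F t 0 = 0 ∧ (∀ x : X, Nt t (F t x) ≤ M) ∧
        (∀ x y : X, Nt t (F t x - F t y) ≤ L * Nt t (x - y)))
    (sol : ℝ → ℝ → X → X)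
    (hsolCont : ContinuousOn (fun p : ℝ × ℝ × X => sol p.1 p.2.1 p.2.2)
      (Set.Ici τ₀ ×ˢ Set.Ici τ₀ ×ˢ (Set.univ : Set X)))
    (hsolId : ∀ τ ∈ Set.Ici τ₀, ∀ x : X, sol τ τ x = x)
    (hsolGrp : ∀ t₀ ∈ Set.Ici τ₀, ∀ t₁ ∈ Set.Ici τ₀, ∀ t₂ ∈ Set.Ici τ₀, ∀ x : X,
      sol t₂ t₀ x = sol t₂ t₁ (sol t₁ t₀ x))
    (hVOC : ∀ s ∈ Set.Ici τ₀, ∀ t ∈ Set.Ici τ₀, ∀ η : X,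
      sol t s η = Φ t s η + ∫ r in s..t, Φ t r (F r (sol r s η)))
    (huniq : ∀ τ ∈ Set.Ici τ₀, ∀ x : ℝ → X, ContinuousOn x (Set.Ici τ₀) →
      (∀ t ∈ Set.Ici τ₀, x t = Φ t τ (x τ) + ∫ r in τ..t, Φ t r (F r (x r))) →
      ∀ t ∈ Set.Ici τ₀, x t = sol t τ (x τ))
    (hKL : K * L < α)
    (φstar : ℝ → X → ℝ → X)
    (hφstarBC : ∀ τ ∈ Set.Ici τ₀, ∀ ξ : X, ContinuousOn (φstar τ ξ) (Set.Ici τ₀) ∧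
      ∃ C : ℝ, ∀ t ∈ Set.Ici τ₀, Nt t (φstar τ ξ t) ≤ C)
    (hφstarFix : ∀ τ ∈ Set.Ici τ₀, ∀ ξ : X, ∀ t ∈ Set.Ici τ₀,
      φstar τ ξ t = ∫ s in τ₀..t, Φ t s (F s (φstar τ ξ s + Φ s τ ξ)))
    (hφstarUniq : ∀ τ ∈ Set.Ici τ₀, ∀ ξ : X, ∀ ψ : ℝ → X, ContinuousOn ψ (Set.Ici τ₀) →
      (∃ C : ℝ, ∀ t ∈ Set.Ici τ₀, Nt t (ψ t) ≤ C) →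
      (∀ t ∈ Set.Ici τ₀, ψ t = ∫ s in τ₀..t, Φ t s (F s (ψ s + Φ s τ ξ))) →
      ∀ t ∈ Set.Ici τ₀, ψ t = φstar τ ξ t)
    :
    (∀ t ∈ Set.Ici τ₀, ∀ ξ : X, Nt t ((ξ + φstar t ξ t) - ξ) ≤ K * M / α) ∧
    (∀ t ∈ Set.Ici τ₀, ∀ η : X,
      Nt t ((η - ∫ s in τ₀..t, Φ t s (F s (sol s t η))) - η) ≤ K * M / α) :=
  statement5_general τ₀ Nt hNadd hNsmul ℓ hNequiv Φ K α hK hα hH1 F L M hM hH2 sol φstar hφstarFix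
end

section
/- Assume (H1), (H2⁰) and K·L < α. Then the map H conjugates the linear and the semilinear dynamics: for all τ, t ∈ I and every ξ ∈ X, the function t ↦ H(t, Φ(t,τ)ξ) satisfies the variation-of-constants equation x(t) = Φ(t,τ)·H(τ,ξ) + ∫_τ^t Φ(t,s) F(s, x(s)) ds, and consequently H(t, Φ(t,τ)ξ) = φ(t, τ, H(τ,ξ)). -/
/-!
Because `Φ(r,s) Φ(s,τ) = Φ(r,τ)`, the fixed-point equations for the data `(s, Φ(s,τ)ξ)` and
`(τ, ξ)` coincide, so `H(t, Φ(t,τ)ξ) = Φ(t,τ)ξ + φ*_τ(ξ)(t)`. For this function the fixed-point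
equation integrates from `τ₀`; splitting the integral at `τ` and pulling `Φ(t,τ)` through the
part over `[τ₀, τ]` turns it into the variation-of-constants equation started at `τ`, and
uniqueness of solutions identifies it with `φ(·, τ, H(τ,ξ))`. The Carathéodory conditions on `F`,
the local boundedness of `ℓ` and the continuity of `Φ` make all the integrands integrable.
-/

open Set MeasureTheory Filter
open scoped Interval

section Caratheodory

variable {α X Y : Type*} [MeasurableSpace α] [TopologicalSpace Y] {F : α → X → Y}

theorem SimpleFunc.stronglyMeasurable_caratheodory_comp [AddCommMonoid Y] [ContinuousAdd Y]
    (hF : ∀ x, StronglyMeasurable fun t => F t x) (s : SimpleFunc α X) :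
    StronglyMeasurable fun t => F t (s t) := by
  classical
  have hsum : (fun t => F t (s t)) = ∑ c ∈ s.range, (s ⁻¹' {c}).indicator fun t => F t c := by
    ext t
    rw [Finset.sum_apply, Finset.sum_eq_single (s t)]
    · simp
    · intro c _ hc
      exact indicator_of_notMem (Ne.symm hc) _
    · simp
  rw [hsum]
  exact Finset.stronglyMeasurable_sum _ fun c _ => (hF c).indicator (s.measurableSet_fiber c)

theorem AEStronglyMeasurable.caratheodory_comp [TopologicalSpace X] [AddCommMonoid Y]
    [ContinuousAdd Y] [TopologicalSpace.PseudoMetrizableSpace Y] {μ : Measure α}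
    (hF : ∀ x, StronglyMeasurable fun t => F t x) (hFc : ∀ᵐ t ∂μ, Continuous (F t))
    {u : α → X} (hu : AEStronglyMeasurable u μ) :
    AEStronglyMeasurable (fun t => F t (u t)) μ := by
  refine aestronglyMeasurable_of_tendsto_ae atTop (fun n =>
    (SimpleFunc.stronglyMeasurable_caratheodory_comp hF
      (hu.stronglyMeasurable_mk.approx n)).aestronglyMeasurable) ?_
  filter_upwards [hFc, hu.ae_eq_mk] with t hFt hut
  rw [hut]
  exact (hFt.tendsto _).comp (hu.stronglyMeasurable_mk.tendsto_approx t)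

end Caratheodory

theorem intervalIntegrable_caratheodory_comp {X Y : Type*} [TopologicalSpace X]
    [NormedAddCommGroup Y] {F : ℝ → X → Y} {a b C : ℝ}
    (hF : ∀ x, StronglyMeasurable fun t => F t x)
    (hFc : ∀ᵐ r ∂volume.restrict (Ι a b), Continuous (F r))
    (hFC : ∀ᵐ r ∂volume.restrict (Ι a b), ∀ y, ‖F r y‖ ≤ C) {u : ℝ → X}
    (hu : AEStronglyMeasurable u (volume.restrict (Ι a b))) :
    IntervalIntegrable (fun r => F r (u r)) volume a b :=
  intervalIntegrable_iff.2 <| IntegrableOn.of_bound measure_Ioc_lt_top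
    (AEStronglyMeasurable.caratheodory_comp hF hFc hu) C (hFC.mono fun _ h => h _)

theorem IntervalIntegrable.continuousOn_clm_apply {E F : Type*} [NormedAddCommGroup E]
    [NormedSpace ℝ E] [NormedAddCommGroup F] [NormedSpace ℝ F] {μ : Measure ℝ}
    {A : ℝ → E →L[ℝ] F} {g : ℝ → E} {a b : ℝ}
    (hg : IntervalIntegrable g μ a b) (hA : ContinuousOn A [[a, b]]) :
    IntervalIntegrable (fun r => A r (g r)) μ a b := by
  obtain ⟨C, hC⟩ := isCompact_uIcc.exists_bound_of_continuousOn hA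
  rw [intervalIntegrable_iff] at hg ⊢
  refine Integrable.mono' (hg.norm.const_mul C) ?_ ?_
  · exact isBoundedBilinearMap_apply.continuous.comp_aestronglyMeasurable
      (((hA.mono uIoc_subset_uIcc).aestronglyMeasurable measurableSet_uIoc).prodMk hg.1)
  · filter_upwards [ae_restrict_mem measurableSet_uIoc] with r hr
    exact ((A r).le_opNorm _).trans
      (mul_le_mul_of_nonneg_right (hC r (uIoc_subset_uIcc hr)) (norm_nonneg _))

section EvolutionFamily

variable {X : Type*} [NormedAddCommGroup X] [NormedSpace ℝ X] {τ₀ : ℝ}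
  {Φ : ℝ → ℝ → X →L[ℝ] X}

theorem continuousOn_evolution_left
    (hΦcont : ContinuousOn (fun p : ℝ × ℝ => Φ p.1 p.2) (Ici τ₀ ×ˢ Ici τ₀))
    {τ : ℝ} (hτ : τ ∈ Ici τ₀) : ContinuousOn (fun s => Φ s τ) (Ici τ₀) :=
  hΦcont.comp (continuous_id.prodMk continuous_const).continuousOn fun _ hs => ⟨hs, hτ⟩

theorem continuousOn_evolution_right
    (hΦcont : ContinuousOn (fun p : ℝ × ℝ => Φ p.1 p.2) (Ici τ₀ ×ˢ Ici τ₀))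
    {t : ℝ} (ht : t ∈ Ici τ₀) : ContinuousOn (fun r => Φ t r) (Ici τ₀) :=
  hΦcont.comp (continuous_const.prodMk continuous_id).continuousOn fun _ hr => ⟨ht, hr⟩

theorem intervalIntegrable_evolution_caratheodory_comp
    (hΦcont : ContinuousOn (fun p : ℝ × ℝ => Φ p.1 p.2) (Ici τ₀ ×ˢ Ici τ₀))
    {Nt : ℝ → X → ℝ} {ℓ : ℝ → ℝ} (hℓpos : ∀ t ∈ Ici τ₀, 0 < ℓ t)
    (hℓloc : ∀ a b : ℝ, ∃ C : ℝ, ∀ t ∈ Icc a b ∩ Ici τ₀, ℓ t ≤ C)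
    (hNlower : ∀ t ∈ Ici τ₀, ∀ x : X, (1 / ℓ t) * ‖x‖ ≤ Nt t x)
    {F : ℝ → X → X} (hFmeas : ∀ x : X, StronglyMeasurable fun t => F t x)
    (hFcont : ∀ᵐ t ∂volume.restrict (Ici τ₀), Continuous (F t))
    {M : ℝ} (hM : 0 ≤ M) (hFM : ∀ᵐ t ∂volume.restrict (Ici τ₀), ∀ x : X, Nt t (F t x) ≤ M)
    {x : ℝ → X} (hx : ContinuousOn x (Ici τ₀)) {t a b : ℝ}
    (ht : t ∈ Ici τ₀) (ha : a ∈ Ici τ₀) (hb : b ∈ Ici τ₀) :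
    IntervalIntegrable (fun r => Φ t r (F r (x r))) volume a b := by
  have hIcc : [[a, b]] ⊆ Ici τ₀ := fun r hr => le_trans (le_min ha hb) hr.1
  have hIoc : Ι a b ⊆ Ici τ₀ := uIoc_subset_uIcc.trans hIcc
  obtain ⟨C, hC⟩ := hℓloc (min a b) (max a b)
  refine IntervalIntegrable.continuousOn_clm_apply ?_
    ((continuousOn_evolution_right hΦcont ht).mono hIcc)
  refine intervalIntegrable_caratheodory_comp (C := C * M) hFmeas
    (ae_restrict_of_ae_restrict_of_subset hIoc hFcont) ?_
    ((hx.mono hIoc).aestronglyMeasurable measurableSet_uIoc)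
  filter_upwards [ae_restrict_of_ae_restrict_of_subset hIoc hFM,
    ae_restrict_mem measurableSet_uIoc] with r hFr hr y
  have hrI : r ∈ Ici τ₀ := hIoc hr
  have hℓ : ‖F r y‖ / ℓ r ≤ M := by
    simpa only [one_div_mul_eq_div] using (hNlower r hrI (F r y)).trans (hFr y)
  calc ‖F r y‖ ≤ ℓ r * M := (div_le_iff₀' (hℓpos r hrI)).1 hℓ
    _ ≤ C * M := mul_le_mul_of_nonneg_right (hC r ⟨uIoc_subset_uIcc hr, hrI⟩) hM

theorem eq_evolution_add_integral_of_eq_from_base [CompleteSpace X]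
    (hΦid : ∀ t ∈ Ici τ₀, Φ t t = ContinuousLinearMap.id ℝ X)
    (hΦcomp : ∀ t ∈ Ici τ₀, ∀ r ∈ Ici τ₀, ∀ s ∈ Ici τ₀, Φ t s = (Φ t r).comp (Φ r s))
    {g : ℝ → X} (hg : ∀ t ∈ Ici τ₀, ∀ a ∈ Ici τ₀, ∀ b ∈ Ici τ₀,
      IntervalIntegrable (fun r => Φ t r (g r)) volume a b)
    {x : ℝ → X} {τ : ℝ} (hτ : τ ∈ Ici τ₀) {ξ : X}
    (hx : ∀ u ∈ Ici τ₀, x u = Φ u τ ξ + ∫ r in τ₀..u, Φ u r (g r))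
    {t : ℝ} (ht : t ∈ Ici τ₀) :
    x t = Φ t τ (x τ) + ∫ r in τ..t, Φ t r (g r) := by
  have hbase : τ₀ ∈ Ici τ₀ := self_mem_Ici
  have hpush : Φ t τ (∫ r in τ₀..τ, Φ τ r (g r)) = ∫ r in τ₀..τ, Φ t r (g r) := by
    rw [← ContinuousLinearMap.intervalIntegral_comp_comm _ (hg τ hτ τ₀ hbase τ hτ)]
    refine intervalIntegral.integral_congr fun r hr => ?_
    rw [uIcc_of_le hτ] at hr
    simp only [hΦcomp t ht τ hτ r hr.1, ContinuousLinearMap.comp_apply]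
  rw [hx t ht, hx τ hτ, hΦid τ hτ, ContinuousLinearMap.id_apply, map_add, hpush,
    ← intervalIntegral.integral_add_adjacent_intervals (hg t ht τ₀ hbase τ hτ)
      (hg t ht τ hτ t ht)]
  abel

theorem fixedPoint_eq_along_orbit
    (hΦcomp : ∀ t ∈ Ici τ₀, ∀ r ∈ Ici τ₀, ∀ s ∈ Ici τ₀, Φ t s = (Φ t r).comp (Φ r s))
    {Nt : ℝ → X → ℝ} {F : ℝ → X → X} {φstar : ℝ → X → ℝ → X}
    (hφstarBC : ∀ τ ∈ Ici τ₀, ∀ ξ : X, ContinuousOn (φstar τ ξ) (Ici τ₀) ∧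
      ∃ C : ℝ, ∀ t ∈ Ici τ₀, Nt t (φstar τ ξ t) ≤ C)
    (hφstarFix : ∀ τ ∈ Ici τ₀, ∀ ξ : X, ∀ t ∈ Ici τ₀,
      φstar τ ξ t = ∫ s in τ₀..t, Φ t s (F s (φstar τ ξ s + Φ s τ ξ)))
    (hφstarUniq : ∀ τ ∈ Ici τ₀, ∀ ξ : X, ∀ ψ : ℝ → X, ContinuousOn ψ (Ici τ₀) →
      (∃ C : ℝ, ∀ t ∈ Ici τ₀, Nt t (ψ t) ≤ C) →
      (∀ t ∈ Ici τ₀, ψ t = ∫ s in τ₀..t, Φ t s (F s (ψ s + Φ s τ ξ))) →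
      ∀ t ∈ Ici τ₀, ψ t = φstar τ ξ t)
    {τ s : ℝ} (hτ : τ ∈ Ici τ₀) (hs : s ∈ Ici τ₀) (ξ : X) {u : ℝ} (hu : u ∈ Ici τ₀) :
    φstar s (Φ s τ ξ) u = φstar τ ξ u := by
  refine (hφstarUniq s hs (Φ s τ ξ) (φstar τ ξ) (hφstarBC τ hτ ξ).1 (hφstarBC τ hτ ξ).2
    (fun v hv => ?_) u hu).symm
  rw [hφstarFix τ hτ ξ v hv]
  refine intervalIntegral.integral_congr fun r hr => ?_
  rw [uIcc_of_le hv] at hr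
  simp only [hΦcomp r hr.1 s hs τ hτ, ContinuousLinearMap.comp_apply]

end EvolutionFamily

theorem statement6_general
    {X : Type*} [NormedAddCommGroup X] [NormedSpace ℝ X] [CompleteSpace X]
    (τ₀ : ℝ)
    (Nt : ℝ → X → ℝ)
    (ℓ : ℝ → ℝ)
    (hℓpos : ∀ t ∈ Set.Ici τ₀, 0 < ℓ t)
    (hℓloc : ∀ a b : ℝ, ∃ C : ℝ, ∀ t ∈ Set.Icc a b ∩ Set.Ici τ₀, ℓ t ≤ C)
    (hNequiv : ∀ t ∈ Set.Ici τ₀, ∀ x : X, (1 / ℓ t) * ‖x‖ ≤ Nt t x ∧ Nt t x ≤ ℓ t * ‖x‖)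
    (Φ : ℝ → ℝ → X →L[ℝ] X)
    (hΦcont : ContinuousOn (fun p : ℝ × ℝ => Φ p.1 p.2) (Set.Ici τ₀ ×ˢ Set.Ici τ₀))
    (hΦid : ∀ t ∈ Set.Ici τ₀, Φ t t = ContinuousLinearMap.id ℝ X)
    (hΦcomp : ∀ t ∈ Set.Ici τ₀, ∀ r ∈ Set.Ici τ₀, ∀ s ∈ Set.Ici τ₀,
      Φ t s = (Φ t r).comp (Φ r s))
    (F : ℝ → X → X)
    (hFmeas : ∀ x : X, StronglyMeasurable (fun t => F t x))
    (hFcont : ∀ᵐ t ∂(volume.restrict (Set.Ici τ₀)), Continuous (F t))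
    (L M : ℝ) (hM : 0 ≤ M)
    (hH2 : ∀ᵐ t ∂(volume.restrict (Set.Ici τ₀)),
      F t 0 = 0 ∧ (∀ x : X, Nt t (F t x) ≤ M) ∧
        (∀ x y : X, Nt t (F t x - F t y) ≤ L * Nt t (x - y)))
    (sol : ℝ → ℝ → X → X)
    (huniq : ∀ τ ∈ Set.Ici τ₀, ∀ x : ℝ → X, ContinuousOn x (Set.Ici τ₀) →
      (∀ t ∈ Set.Ici τ₀, x t = Φ t τ (x τ) + ∫ r in τ..t, Φ t r (F r (x r))) →
      ∀ t ∈ Set.Ici τ₀, x t = sol t τ (x τ))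
    (φstar : ℝ → X → ℝ → X)
    (hφstarBC : ∀ τ ∈ Set.Ici τ₀, ∀ ξ : X, ContinuousOn (φstar τ ξ) (Set.Ici τ₀) ∧
      ∃ C : ℝ, ∀ t ∈ Set.Ici τ₀, Nt t (φstar τ ξ t) ≤ C)
    (hφstarFix : ∀ τ ∈ Set.Ici τ₀, ∀ ξ : X, ∀ t ∈ Set.Ici τ₀,
      φstar τ ξ t = ∫ s in τ₀..t, Φ t s (F s (φstar τ ξ s + Φ s τ ξ)))
    (hφstarUniq : ∀ τ ∈ Set.Ici τ₀, ∀ ξ : X, ∀ ψ : ℝ → X, ContinuousOn ψ (Set.Ici τ₀) →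
      (∃ C : ℝ, ∀ t ∈ Set.Ici τ₀, Nt t (ψ t) ≤ C) →
      (∀ t ∈ Set.Ici τ₀, ψ t = ∫ s in τ₀..t, Φ t s (F s (ψ s + Φ s τ ξ))) →
      ∀ t ∈ Set.Ici τ₀, ψ t = φstar τ ξ t)
    :
    ∀ τ ∈ Set.Ici τ₀, ∀ ξ : X, ∀ t ∈ Set.Ici τ₀,
      (Φ t τ ξ + φstar t (Φ t τ ξ) t
        = Φ t τ (ξ + φstar τ ξ τ)
          + ∫ s in τ..t, Φ t s (F s (Φ s τ ξ + φstar s (Φ s τ ξ) s))) ∧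
      Φ t τ ξ + φstar t (Φ t τ ξ) t = sol t τ (ξ + φstar τ ξ τ) := by
  intro τ hτ ξ
  set x : ℝ → X := fun s => Φ s τ ξ + φstar s (Φ s τ ξ) s
  have hx : ∀ s ∈ Ici τ₀, x s = Φ s τ ξ + φstar τ ξ s := fun s hs => by
    simp only [x, fixedPoint_eq_along_orbit hΦcomp hφstarBC hφstarFix hφstarUniq hτ hs ξ hs]
  have hxτ : x τ = ξ + φstar τ ξ τ := by
    rw [hx τ hτ, hΦid τ hτ, ContinuousLinearMap.id_apply]
  have hx_cont : ContinuousOn x (Ici τ₀) :=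
    (((continuousOn_evolution_left hΦcont hτ).clm_apply continuousOn_const).add
      (hφstarBC τ hτ ξ).1).congr hx
  have hx_base : ∀ u ∈ Ici τ₀, x u = Φ u τ ξ + ∫ r in τ₀..u, Φ u r (F r (x r)) := by
    intro u hu
    rw [hx u hu, hφstarFix τ hτ ξ u hu]
    congr 1
    refine intervalIntegral.integral_congr fun r hr => ?_
    rw [uIcc_of_le hu] at hr
    simp only [hx r hr.1, add_comm]
  have hint : ∀ t ∈ Ici τ₀, ∀ a ∈ Ici τ₀, ∀ b ∈ Ici τ₀,
      IntervalIntegrable (fun r => Φ t r (F r (x r))) volume a b :=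
    fun _ ht _ ha _ hb => intervalIntegrable_evolution_caratheodory_comp hΦcont hℓpos hℓloc
      (fun t ht y => (hNequiv t ht y).1) hFmeas hFcont hM (hH2.mono fun _ h => h.2.1) hx_cont
      ht ha hb
  have hvoc : ∀ t ∈ Ici τ₀, x t = Φ t τ (x τ) + ∫ r in τ..t, Φ t r (F r (x r)) :=
    fun _ ht => eq_evolution_add_integral_of_eq_from_base hΦid hΦcomp hint hτ hx_base ht
  intro t ht
  rw [← hxτ]
  exact ⟨hvoc t ht, huniq τ hτ x hx_cont hvoc t ht⟩

theorem statement6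
    {X : Type*} [NormedAddCommGroup X] [NormedSpace ℝ X] [CompleteSpace X]
    (τ₀ : ℝ)
    (Nt : ℝ → X → ℝ)
    (hNadd : ∀ t : ℝ, ∀ x y : X, Nt t (x + y) ≤ Nt t x + Nt t y)
    (hNsmul : ∀ t : ℝ, ∀ c : ℝ, ∀ x : X, Nt t (c • x) = |c| * Nt t x)
    (ℓ : ℝ → ℝ)
    (hℓpos : ∀ t ∈ Set.Ici τ₀, 0 < ℓ t)
    (hℓloc : ∀ a b : ℝ, ∃ C : ℝ, ∀ t ∈ Set.Icc a b ∩ Set.Ici τ₀, ℓ t ≤ C)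
    (hNequiv : ∀ t ∈ Set.Ici τ₀, ∀ x : X, (1 / ℓ t) * ‖x‖ ≤ Nt t x ∧ Nt t x ≤ ℓ t * ‖x‖)
    (Φ : ℝ → ℝ → X →L[ℝ] X)
    (hΦcont : ContinuousOn (fun p : ℝ × ℝ => Φ p.1 p.2) (Set.Ici τ₀ ×ˢ Set.Ici τ₀))
    (hΦid : ∀ t ∈ Set.Ici τ₀, Φ t t = ContinuousLinearMap.id ℝ X)
    (hΦcomp : ∀ t ∈ Set.Ici τ₀, ∀ r ∈ Set.Ici τ₀, ∀ s ∈ Set.Ici τ₀,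
      Φ t s = (Φ t r).comp (Φ r s))
    (K α : ℝ) (hK : 1 ≤ K) (hα : 0 < α)
    (hH1 : ∀ s ∈ Set.Ici τ₀, ∀ t ∈ Set.Ici τ₀, s ≤ t → ∀ x : X,
      Nt t (Φ t s x) ≤ K * Real.exp (-α * (t - s)) * Nt s x)
    (F : ℝ → X → X)
    (hFmeas : ∀ x : X, StronglyMeasurable (fun t => F t x))
    (hFcont : ∀ᵐ t ∂(volume.restrict (Set.Ici τ₀)), Continuous (F t))
    (L M : ℝ) (hL : 0 ≤ L) (hM : 0 ≤ M)
    (hH2 : ∀ᵐ t ∂(volume.restrict (Set.Ici τ₀)),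
      F t 0 = 0 ∧ (∀ x : X, Nt t (F t x) ≤ M) ∧
        (∀ x y : X, Nt t (F t x - F t y) ≤ L * Nt t (x - y)))
    (sol : ℝ → ℝ → X → X)
    (hsolCont : ContinuousOn (fun p : ℝ × ℝ × X => sol p.1 p.2.1 p.2.2)
      (Set.Ici τ₀ ×ˢ Set.Ici τ₀ ×ˢ (Set.univ : Set X)))
    (hsolId : ∀ τ ∈ Set.Ici τ₀, ∀ x : X, sol τ τ x = x)
    (hsolGrp : ∀ t₀ ∈ Set.Ici τ₀, ∀ t₁ ∈ Set.Ici τ₀, ∀ t₂ ∈ Set.Ici τ₀, ∀ x : X,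
      sol t₂ t₀ x = sol t₂ t₁ (sol t₁ t₀ x))
    (hVOC : ∀ s ∈ Set.Ici τ₀, ∀ t ∈ Set.Ici τ₀, ∀ η : X,
      sol t s η = Φ t s η + ∫ r in s..t, Φ t r (F r (sol r s η)))
    (huniq : ∀ τ ∈ Set.Ici τ₀, ∀ x : ℝ → X, ContinuousOn x (Set.Ici τ₀) →
      (∀ t ∈ Set.Ici τ₀, x t = Φ t τ (x τ) + ∫ r in τ..t, Φ t r (F r (x r))) →
      ∀ t ∈ Set.Ici τ₀, x t = sol t τ (x τ))
    (hKL : K * L < α)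
    (φstar : ℝ → X → ℝ → X)
    (hφstarBC : ∀ τ ∈ Set.Ici τ₀, ∀ ξ : X, ContinuousOn (φstar τ ξ) (Set.Ici τ₀) ∧
      ∃ C : ℝ, ∀ t ∈ Set.Ici τ₀, Nt t (φstar τ ξ t) ≤ C)
    (hφstarFix : ∀ τ ∈ Set.Ici τ₀, ∀ ξ : X, ∀ t ∈ Set.Ici τ₀,
      φstar τ ξ t = ∫ s in τ₀..t, Φ t s (F s (φstar τ ξ s + Φ s τ ξ)))
    (hφstarUniq : ∀ τ ∈ Set.Ici τ₀, ∀ ξ : X, ∀ ψ : ℝ → X, ContinuousOn ψ (Set.Ici τ₀) →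
      (∃ C : ℝ, ∀ t ∈ Set.Ici τ₀, Nt t (ψ t) ≤ C) →
      (∀ t ∈ Set.Ici τ₀, ψ t = ∫ s in τ₀..t, Φ t s (F s (ψ s + Φ s τ ξ))) →
      ∀ t ∈ Set.Ici τ₀, ψ t = φstar τ ξ t)
    :
    ∀ τ ∈ Set.Ici τ₀, ∀ ξ : X, ∀ t ∈ Set.Ici τ₀,
      (Φ t τ ξ + φstar t (Φ t τ ξ) t
        = Φ t τ (ξ + φstar τ ξ τ)
          + ∫ s in τ..t, Φ t s (F s (Φ s τ ξ + φstar s (Φ s τ ξ) s))) ∧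
      Φ t τ ξ + φstar t (Φ t τ ξ) t = sol t τ (ξ + φstar τ ξ τ) :=
  statement6_general τ₀ Nt ℓ hℓpos hℓloc hNequiv Φ hΦcont hΦid hΦcomp F hFmeas hFcont L M hM hH2 sol
    huniq φstar hφstarBC hφstarFix hφstarUniq
end

section
/- Assume (H1), (H2⁰) and K·L < α. Then for every τ ∈ I the maps H(τ,·) and G(τ,·) are mutually inverse bijections of X: H(τ, G(τ,η)) = η for all η ∈ X and G(τ, H(τ,ξ)) = ξ for all ξ ∈ X. -/
/-!
Write `ξ ↦ ξ + φ*_τ(ξ)(τ)` for `H(τ, ·)` and `G(τ, ·)` for the other map. Because `φ*_τ(ξ)` solves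
its fixed-point equation, `x(t) := φ*_τ(ξ)(t) + Φ(t,τ)ξ` satisfies the variation-of-constants
formula from `τ₀`, where `x(τ₀) = Φ(τ₀,τ)ξ`. By uniqueness `x` is the solution through
`x(τ) = H(τ,ξ)`, so the integral in `G(τ, H(τ,ξ))` is exactly `φ*_τ(ξ)(τ)` and `G ∘ H = id`.
Moreover the variation-of-constants formula shows `G(τ,η) = Φ(τ,τ₀) φ(τ₀,τ,η)`, a composition
of injective maps, so `G(τ, ·)` is injective and hence also `H ∘ G = id`.
-/

open Set MeasureTheory Real

section

variable {X : Type*} {I : Set ℝ} {sol : ℝ → ℝ → X → X}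

theorem solution_leftInverse (hsolId : ∀ τ ∈ I, ∀ x : X, sol τ τ x = x)
    (hsolGrp : ∀ t₀ ∈ I, ∀ t₁ ∈ I, ∀ t₂ ∈ I, ∀ x : X, sol t₂ t₀ x = sol t₂ t₁ (sol t₁ t₀ x))
    {s t : ℝ} (hs : s ∈ I) (ht : t ∈ I) : Function.LeftInverse (sol t s) (sol s t) := fun x => by
  rw [← hsolGrp t ht s hs t ht, hsolId t ht]

variable [NormedAddCommGroup X] [NormedSpace ℝ X] {Φ : ℝ → ℝ → X →L[ℝ] X} {F : ℝ → X → X}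

theorem evolution_leftInverse (hΦid : ∀ t ∈ I, Φ t t = ContinuousLinearMap.id ℝ X)
    (hΦcomp : ∀ t ∈ I, ∀ r ∈ I, ∀ s ∈ I, Φ t s = (Φ t r).comp (Φ r s))
    {s t : ℝ} (hs : s ∈ I) (ht : t ∈ I) : Function.LeftInverse (Φ s t) (Φ t s) := fun y => by
  rw [← ContinuousLinearMap.comp_apply, ← hΦcomp s hs t ht s hs, hΦid s hs]
  rfl

theorem sub_integral_solution_eq_evolution_apply_solution [I.OrdConnected]
    (hsolId : ∀ τ ∈ I, ∀ x : X, sol τ τ x = x)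
    (hsolGrp : ∀ t₀ ∈ I, ∀ t₁ ∈ I, ∀ t₂ ∈ I, ∀ x : X, sol t₂ t₀ x = sol t₂ t₁ (sol t₁ t₀ x))
    (hVOC : ∀ s ∈ I, ∀ t ∈ I, ∀ η : X,
      sol t s η = Φ t s η + ∫ r in s..t, Φ t r (F r (sol r s η)))
    {s t : ℝ} (hs : s ∈ I) (ht : t ∈ I) (η : X) :
    η - ∫ r in s..t, Φ t r (F r (sol r t η)) = Φ t s (sol s t η) := by
  have hintegrand : ∫ r in s..t, Φ t r (F r (sol r s (sol s t η)))
      = ∫ r in s..t, Φ t r (F r (sol r t η)) :=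
    intervalIntegral.integral_congr fun r hr => by
      simp only [← hsolGrp t ht s hs r (‹I.OrdConnected›.uIcc_subset hs ht hr)]
  have h := hVOC s hs t ht (sol s t η)
  rw [solution_leftInverse hsolId hsolGrp hs ht, hintegrand] at h
  exact sub_eq_of_eq_add h

theorem solution_add_fixedPoint_eq
    (hΦcont : ContinuousOn (fun p : ℝ × ℝ => Φ p.1 p.2) (I ×ˢ I))
    (hΦid : ∀ t ∈ I, Φ t t = ContinuousLinearMap.id ℝ X)
    (hΦcomp : ∀ t ∈ I, ∀ r ∈ I, ∀ s ∈ I, Φ t s = (Φ t r).comp (Φ r s))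
    (hsolGrp : ∀ t₀ ∈ I, ∀ t₁ ∈ I, ∀ t₂ ∈ I, ∀ x : X, sol t₂ t₀ x = sol t₂ t₁ (sol t₁ t₀ x))
    (huniq : ∀ τ ∈ I, ∀ x : ℝ → X, ContinuousOn x I →
      (∀ t ∈ I, x t = Φ t τ (x τ) + ∫ r in τ..t, Φ t r (F r (x r))) →
      ∀ t ∈ I, x t = sol t τ (x τ))
    {a τ : ℝ} (ha : a ∈ I) (hτ : τ ∈ I) {ξ : X} {ψ : ℝ → X} (hψ : ContinuousOn ψ I)
    (hψfix : ∀ t ∈ I, ψ t = ∫ s in a..t, Φ t s (F s (ψ s + Φ s τ ξ)))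
    {t : ℝ} (ht : t ∈ I) :
    sol t τ (ξ + ψ τ) = ψ t + Φ t τ ξ := by
  set x : ℝ → X := fun s => ψ s + Φ s τ ξ with hx
  have hxcont : ContinuousOn x I :=
    hψ.add ((hΦcont.comp (continuous_id.prodMk continuous_const).continuousOn
      fun s hs => ⟨hs, hτ⟩).clm_apply continuousOn_const)
  have hxa : x a = Φ a τ ξ := by
    simp only [hx, hψfix a ha, intervalIntegral.integral_same, zero_add]
  have hxvoc : ∀ s ∈ I, x s = Φ s a (x a) + ∫ r in a..s, Φ s r (F r (x r)) := fun s hs => by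
    rw [hxa, ← ContinuousLinearMap.comp_apply, ← hΦcomp s hs a ha τ hτ, hx, ← hψfix s hs,
      add_comm]
  have hxτ : ξ + ψ τ = x τ := by
    show ξ + ψ τ = ψ τ + Φ τ τ ξ
    rw [hΦid τ hτ, ContinuousLinearMap.id_apply, add_comm]
  rw [hxτ, huniq a ha x hxcont hxvoc τ hτ, ← hsolGrp a ha τ hτ t ht,
    ← huniq a ha x hxcont hxvoc t ht]

theorem sub_integral_solution_add_fixedPoint [I.OrdConnected]
    (hΦcont : ContinuousOn (fun p : ℝ × ℝ => Φ p.1 p.2) (I ×ˢ I))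
    (hΦid : ∀ t ∈ I, Φ t t = ContinuousLinearMap.id ℝ X)
    (hΦcomp : ∀ t ∈ I, ∀ r ∈ I, ∀ s ∈ I, Φ t s = (Φ t r).comp (Φ r s))
    (hsolGrp : ∀ t₀ ∈ I, ∀ t₁ ∈ I, ∀ t₂ ∈ I, ∀ x : X, sol t₂ t₀ x = sol t₂ t₁ (sol t₁ t₀ x))
    (huniq : ∀ τ ∈ I, ∀ x : ℝ → X, ContinuousOn x I →
      (∀ t ∈ I, x t = Φ t τ (x τ) + ∫ r in τ..t, Φ t r (F r (x r))) →
      ∀ t ∈ I, x t = sol t τ (x τ))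
    {a τ : ℝ} (ha : a ∈ I) (hτ : τ ∈ I) {ξ : X} {ψ : ℝ → X} (hψ : ContinuousOn ψ I)
    (hψfix : ∀ t ∈ I, ψ t = ∫ s in a..t, Φ t s (F s (ψ s + Φ s τ ξ))) :
    (ξ + ψ τ) - ∫ s in a..τ, Φ τ s (F s (sol s τ (ξ + ψ τ))) = ξ := by
  have hintegral : ∫ s in a..τ, Φ τ s (F s (sol s τ (ξ + ψ τ))) = ψ τ := by
    refine (intervalIntegral.integral_congr fun s hs => ?_).trans (hψfix τ hτ).symm
    simp only [solution_add_fixedPoint_eq hΦcont hΦid hΦcomp hsolGrp huniq ha hτ hψ hψfix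
      (‹I.OrdConnected›.uIcc_subset ha hτ hs)]
  rw [hintegral, add_sub_cancel_right]

end

theorem statement8_general
    {X : Type*} [NormedAddCommGroup X] [NormedSpace ℝ X]
    (τ₀ : ℝ)
    (Nt : ℝ → X → ℝ)
    (Φ : ℝ → ℝ → X →L[ℝ] X)
    (hΦcont : ContinuousOn (fun p : ℝ × ℝ => Φ p.1 p.2) (Set.Ici τ₀ ×ˢ Set.Ici τ₀))
    (hΦid : ∀ t ∈ Set.Ici τ₀, Φ t t = ContinuousLinearMap.id ℝ X)
    (hΦcomp : ∀ t ∈ Set.Ici τ₀, ∀ r ∈ Set.Ici τ₀, ∀ s ∈ Set.Ici τ₀,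
      Φ t s = (Φ t r).comp (Φ r s))
    (F : ℝ → X → X)
    (L : ℝ)
    (sol : ℝ → ℝ → X → X)
    (hsolId : ∀ τ ∈ Set.Ici τ₀, ∀ x : X, sol τ τ x = x)
    (hsolGrp : ∀ t₀ ∈ Set.Ici τ₀, ∀ t₁ ∈ Set.Ici τ₀, ∀ t₂ ∈ Set.Ici τ₀, ∀ x : X,
      sol t₂ t₀ x = sol t₂ t₁ (sol t₁ t₀ x))
    (hVOC : ∀ s ∈ Set.Ici τ₀, ∀ t ∈ Set.Ici τ₀, ∀ η : X,
      sol t s η = Φ t s η + ∫ r in s..t, Φ t r (F r (sol r s η)))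
    (huniq : ∀ τ ∈ Set.Ici τ₀, ∀ x : ℝ → X, ContinuousOn x (Set.Ici τ₀) →
      (∀ t ∈ Set.Ici τ₀, x t = Φ t τ (x τ) + ∫ r in τ..t, Φ t r (F r (x r))) →
      ∀ t ∈ Set.Ici τ₀, x t = sol t τ (x τ))
    (φstar : ℝ → X → ℝ → X)
    (hφstarBC : ∀ τ ∈ Set.Ici τ₀, ∀ ξ : X, ContinuousOn (φstar τ ξ) (Set.Ici τ₀) ∧
      ∃ C : ℝ, ∀ t ∈ Set.Ici τ₀, Nt t (φstar τ ξ t) ≤ C)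
    (hφstarFix : ∀ τ ∈ Set.Ici τ₀, ∀ ξ : X, ∀ t ∈ Set.Ici τ₀,
      φstar τ ξ t = ∫ s in τ₀..t, Φ t s (F s (φstar τ ξ s + Φ s τ ξ)))
    :
    ∀ τ ∈ Set.Ici τ₀,
      (∀ η : X,
        (η - ∫ s in τ₀..τ, Φ τ s (F s (sol s τ η)))
          + φstar τ (η - ∫ s in τ₀..τ, Φ τ s (F s (sol s τ η))) τ = η) ∧
      (∀ ξ : X,
        (ξ + φstar τ ξ τ)
          - ∫ s in τ₀..τ, Φ τ s (F s (sol s τ (ξ + φstar τ ξ τ))) = ξ) := by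
  intro τ hτ
  have hτ₀ : τ₀ ∈ Set.Ici τ₀ := Set.self_mem_Ici
  set G : X → X := fun η => η - ∫ s in τ₀..τ, Φ τ s (F s (sol s τ η))
  have hGH : ∀ ξ, G (ξ + φstar τ ξ τ) = ξ := fun ξ =>
    sub_integral_solution_add_fixedPoint hΦcont hΦid hΦcomp hsolGrp huniq hτ₀ hτ
      (hφstarBC τ hτ ξ).1 (hφstarFix τ hτ ξ)
  have hG_inj : G.Injective := by
    have hG_eq : G = Φ τ τ₀ ∘ sol τ₀ τ := funext
      (sub_integral_solution_eq_evolution_apply_solution hsolId hsolGrp hVOC hτ₀ hτ)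
    rw [hG_eq]
    exact (evolution_leftInverse hΦid hΦcomp hτ₀ hτ).injective.comp
      (solution_leftInverse hsolId hsolGrp hτ₀ hτ).injective
  exact ⟨fun η => hG_inj (hGH (G η)), hGH⟩

theorem statement8
    {X : Type*} [NormedAddCommGroup X] [NormedSpace ℝ X] [CompleteSpace X]
    (τ₀ : ℝ)
    (Nt : ℝ → X → ℝ)
    (hNadd : ∀ t : ℝ, ∀ x y : X, Nt t (x + y) ≤ Nt t x + Nt t y)
    (hNsmul : ∀ t : ℝ, ∀ c : ℝ, ∀ x : X, Nt t (c • x) = |c| * Nt t x)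
    (ℓ : ℝ → ℝ)
    (hℓpos : ∀ t ∈ Set.Ici τ₀, 0 < ℓ t)
    (hℓloc : ∀ a b : ℝ, ∃ C : ℝ, ∀ t ∈ Set.Icc a b ∩ Set.Ici τ₀, ℓ t ≤ C)
    (hNequiv : ∀ t ∈ Set.Ici τ₀, ∀ x : X, (1 / ℓ t) * ‖x‖ ≤ Nt t x ∧ Nt t x ≤ ℓ t * ‖x‖)
    (Φ : ℝ → ℝ → X →L[ℝ] X)
    (hΦcont : ContinuousOn (fun p : ℝ × ℝ => Φ p.1 p.2) (Set.Ici τ₀ ×ˢ Set.Ici τ₀))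
    (hΦid : ∀ t ∈ Set.Ici τ₀, Φ t t = ContinuousLinearMap.id ℝ X)
    (hΦcomp : ∀ t ∈ Set.Ici τ₀, ∀ r ∈ Set.Ici τ₀, ∀ s ∈ Set.Ici τ₀,
      Φ t s = (Φ t r).comp (Φ r s))
    (K α : ℝ) (hK : 1 ≤ K) (hα : 0 < α)
    (hH1 : ∀ s ∈ Set.Ici τ₀, ∀ t ∈ Set.Ici τ₀, s ≤ t → ∀ x : X,
      Nt t (Φ t s x) ≤ K * Real.exp (-α * (t - s)) * Nt s x)
    (F : ℝ → X → X)
    (hFmeas : ∀ x : X, StronglyMeasurable (fun t => F t x))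
    (hFcont : ∀ᵐ t ∂(volume.restrict (Set.Ici τ₀)), Continuous (F t))
    (L M : ℝ) (hL : 0 ≤ L) (hM : 0 ≤ M)
    (hH2 : ∀ᵐ t ∂(volume.restrict (Set.Ici τ₀)),
      F t 0 = 0 ∧ (∀ x : X, Nt t (F t x) ≤ M) ∧
        (∀ x y : X, Nt t (F t x - F t y) ≤ L * Nt t (x - y)))
    (sol : ℝ → ℝ → X → X)
    (hsolCont : ContinuousOn (fun p : ℝ × ℝ × X => sol p.1 p.2.1 p.2.2)
      (Set.Ici τ₀ ×ˢ Set.Ici τ₀ ×ˢ (Set.univ : Set X)))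
    (hsolId : ∀ τ ∈ Set.Ici τ₀, ∀ x : X, sol τ τ x = x)
    (hsolGrp : ∀ t₀ ∈ Set.Ici τ₀, ∀ t₁ ∈ Set.Ici τ₀, ∀ t₂ ∈ Set.Ici τ₀, ∀ x : X,
      sol t₂ t₀ x = sol t₂ t₁ (sol t₁ t₀ x))
    (hVOC : ∀ s ∈ Set.Ici τ₀, ∀ t ∈ Set.Ici τ₀, ∀ η : X,
      sol t s η = Φ t s η + ∫ r in s..t, Φ t r (F r (sol r s η)))
    (huniq : ∀ τ ∈ Set.Ici τ₀, ∀ x : ℝ → X, ContinuousOn x (Set.Ici τ₀) →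
      (∀ t ∈ Set.Ici τ₀, x t = Φ t τ (x τ) + ∫ r in τ..t, Φ t r (F r (x r))) →
      ∀ t ∈ Set.Ici τ₀, x t = sol t τ (x τ))
    (hKL : K * L < α)
    (φstar : ℝ → X → ℝ → X)
    (hφstarBC : ∀ τ ∈ Set.Ici τ₀, ∀ ξ : X, ContinuousOn (φstar τ ξ) (Set.Ici τ₀) ∧
      ∃ C : ℝ, ∀ t ∈ Set.Ici τ₀, Nt t (φstar τ ξ t) ≤ C)
    (hφstarFix : ∀ τ ∈ Set.Ici τ₀, ∀ ξ : X, ∀ t ∈ Set.Ici τ₀,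
      φstar τ ξ t = ∫ s in τ₀..t, Φ t s (F s (φstar τ ξ s + Φ s τ ξ)))
    (hφstarUniq : ∀ τ ∈ Set.Ici τ₀, ∀ ξ : X, ∀ ψ : ℝ → X, ContinuousOn ψ (Set.Ici τ₀) →
      (∃ C : ℝ, ∀ t ∈ Set.Ici τ₀, Nt t (ψ t) ≤ C) →
      (∀ t ∈ Set.Ici τ₀, ψ t = ∫ s in τ₀..t, Φ t s (F s (ψ s + Φ s τ ξ))) →
      ∀ t ∈ Set.Ici τ₀, ψ t = φstar τ ξ t)
    :
    ∀ τ ∈ Set.Ici τ₀,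
      (∀ η : X,
        (η - ∫ s in τ₀..τ, Φ τ s (F s (sol s τ η)))
          + φstar τ (η - ∫ s in τ₀..τ, Φ τ s (F s (sol s τ η))) τ = η) ∧
      (∀ ξ : X,
        (ξ + φstar τ ξ τ)
          - ∫ s in τ₀..τ, Φ τ s (F s (sol s τ (ξ + φstar τ ξ τ))) = ξ) :=
  statement8_general τ₀ Nt Φ hΦcont hΦid hΦcomp F L sol hsolId hsolGrp hVOC huniq φstar hφstarBC
    hφstarFix
end

section
/- Assume (H1), (H2^m) with m ≥ 1 and K·M₁ < α, and assume that for each t ∈ I the map G(t,·) is differentiable with derivative given by differentiation under the integral: D₂G(t,η) = Id − ∫_{τ₀}^t Φ(t,s) ∘ D₂F(s, φ(s,t,η)) ∘ D₃φ(s,t,η) ds. Then D₂G(t,η) = Φ(t,τ₀) ∘ D₃φ(τ₀,t,η) for all t ∈ I and η ∈ X; in particular D₂G(t,η) is an invertible bounded linear operator on X. -/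
open Set MeasureTheory Real


lemma cle_intervalIntegral {E F : Type*} [NormedAddCommGroup E] [NormedSpace ℝ E]
    [NormedAddCommGroup F] [NormedSpace ℝ F] (e : E ≃L[ℝ] F) (f : ℝ → E) (a b : ℝ) :
    e (∫ x in a..b, f x) = ∫ x in a..b, e (f x) := by
  rw [intervalIntegral, intervalIntegral, map_sub, e.integral_comp_comm,
    e.integral_comp_comm]

theorem statement15
    {X : Type*} [NormedAddCommGroup X] [NormedSpace ℝ X] [CompleteSpace X]
    (τ₀ : ℝ)
    (Nt : ℝ → X → ℝ)
    (hNadd : ∀ t : ℝ, ∀ x y : X, Nt t (x + y) ≤ Nt t x + Nt t y)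
    (hNsmul : ∀ t : ℝ, ∀ c : ℝ, ∀ x : X, Nt t (c • x) = |c| * Nt t x)
    (ℓ : ℝ → ℝ)
    (hℓpos : ∀ t ∈ Set.Ici τ₀, 0 < ℓ t)
    (hℓloc : ∀ a b : ℝ, ∃ C : ℝ, ∀ t ∈ Set.Icc a b ∩ Set.Ici τ₀, ℓ t ≤ C)
    (hNequiv : ∀ t ∈ Set.Ici τ₀, ∀ x : X, (1 / ℓ t) * ‖x‖ ≤ Nt t x ∧ Nt t x ≤ ℓ t * ‖x‖)
    (Φ : ℝ → ℝ → X →L[ℝ] X)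
    (hΦcont : ContinuousOn (fun p : ℝ × ℝ => Φ p.1 p.2) (Set.Ici τ₀ ×ˢ Set.Ici τ₀))
    (hΦid : ∀ t ∈ Set.Ici τ₀, Φ t t = ContinuousLinearMap.id ℝ X)
    (hΦcomp : ∀ t ∈ Set.Ici τ₀, ∀ r ∈ Set.Ici τ₀, ∀ s ∈ Set.Ici τ₀,
      Φ t s = (Φ t r).comp (Φ r s))
    (K α : ℝ) (hK : 1 ≤ K) (hα : 0 < α)
    (hH1 : ∀ s ∈ Set.Ici τ₀, ∀ t ∈ Set.Ici τ₀, s ≤ t → ∀ x : X,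
      Nt t (Φ t s x) ≤ K * Real.exp (-α * (t - s)) * Nt s x)
    (F : ℝ → X → X)
    (hFmeas : ∀ x : X, StronglyMeasurable (fun t => F t x))
    (hFcont : ∀ᵐ t ∂(volume.restrict (Set.Ici τ₀)), Continuous (F t))
    (DF : ℝ → X → X →L[ℝ] X)
    (hDF : ∀ᵐ t ∂(volume.restrict (Set.Ici τ₀)), ∀ x : X, HasFDerivAt (F t) (DF t x) x)
    (M₁ : ℝ) (hM₁ : 0 ≤ M₁)
    (hDFbound : ∀ᵐ t ∂(volume.restrict (Set.Ici τ₀)), ∀ x v : X,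
      Nt t (DF t x v) ≤ M₁ * Nt t v)
    (sol : ℝ → ℝ → X → X)
    (hsolCont : ContinuousOn (fun p : ℝ × ℝ × X => sol p.1 p.2.1 p.2.2)
      (Set.Ici τ₀ ×ˢ Set.Ici τ₀ ×ˢ (Set.univ : Set X)))
    (hsolId : ∀ τ ∈ Set.Ici τ₀, ∀ x : X, sol τ τ x = x)
    (hsolGrp : ∀ t₀ ∈ Set.Ici τ₀, ∀ t₁ ∈ Set.Ici τ₀, ∀ t₂ ∈ Set.Ici τ₀, ∀ x : X,
      sol t₂ t₀ x = sol t₂ t₁ (sol t₁ t₀ x))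
    (hVOC : ∀ s ∈ Set.Ici τ₀, ∀ t ∈ Set.Ici τ₀, ∀ η : X,
      sol t s η = Φ t s η + ∫ r in s..t, Φ t r (F r (sol r s η)))
    (Dsol : ℝ → ℝ → X → X →L[ℝ] X)
    (hDsol : ∀ s ∈ Set.Ici τ₀, ∀ t ∈ Set.Ici τ₀, ∀ η : X,
      HasFDerivAt (sol t s) (Dsol t s η) η)
    (hVar : ∀ s ∈ Set.Ici τ₀, ∀ t ∈ Set.Ici τ₀, ∀ η : X,
      Dsol t s η
        = Φ t s + ∫ r in s..t, (Φ t r).comp ((DF r (sol r s η)).comp (Dsol r s η)))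
    (hKM : K * M₁ < α)
    (hDsolId : ∀ s ∈ Set.Ici τ₀, ∀ η : X, Dsol s s η = ContinuousLinearMap.id ℝ X)
    (hDsolInv : ∀ s ∈ Set.Ici τ₀, ∀ t ∈ Set.Ici τ₀, ∀ η : X, ∃ B : X →L[ℝ] X,
      (Dsol t s η).comp B = ContinuousLinearMap.id ℝ X ∧
      B.comp (Dsol t s η) = ContinuousLinearMap.id ℝ X)
    (DG : ℝ → X → X →L[ℝ] X)
    (hDG : ∀ t ∈ Set.Ici τ₀, ∀ η : X,
      HasFDerivAt (fun η' : X => η' - ∫ s in τ₀..t, Φ t s (F s (sol s t η'))) (DG t η) η)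
    (hDGformula : ∀ t ∈ Set.Ici τ₀, ∀ η : X,
      DG t η = ContinuousLinearMap.id ℝ X
        - ∫ s in τ₀..t, (Φ t s).comp ((DF s (sol s t η)).comp (Dsol s t η))) :
    ∀ t ∈ Set.Ici τ₀, ∀ η : X,
      DG t η = (Φ t τ₀).comp (Dsol τ₀ t η) ∧
      ∃ B : X →L[ℝ] X,
        (DG t η).comp B = ContinuousLinearMap.id ℝ X ∧
        B.comp (DG t η) = ContinuousLinearMap.id ℝ X := by

  intro t ht η
  have ht' : τ₀ ≤ t := ht
  have ht0 : τ₀ ∈ Set.Ici τ₀ := Set.self_mem_Ici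
  have hid1 : (Φ t τ₀).comp (Φ τ₀ t) = ContinuousLinearMap.id ℝ X := by
    rw [← hΦcomp t ht τ₀ ht0 t ht, hΦid t ht]
  have hid2 : (Φ τ₀ t).comp (Φ t τ₀) = ContinuousLinearMap.id ℝ X := by
    rw [← hΦcomp τ₀ ht0 t ht τ₀ ht0, hΦid τ₀ ht0]
  let L : (X →L[ℝ] X) ≃L[ℝ] (X →L[ℝ] X) :=
    ContinuousLinearEquiv.equivOfInverse (ContinuousLinearMap.compL ℝ X X X (Φ t τ₀))
      (ContinuousLinearMap.compL ℝ X X X (Φ τ₀ t))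
      (fun A => by
        rw [ContinuousLinearMap.compL_apply, ContinuousLinearMap.compL_apply,
          ← ContinuousLinearMap.comp_assoc, hid2, ContinuousLinearMap.id_comp])
      (fun A => by
        rw [ContinuousLinearMap.compL_apply, ContinuousLinearMap.compL_apply,
          ← ContinuousLinearMap.comp_assoc, hid1, ContinuousLinearMap.id_comp])
  have hL : ∀ A : X →L[ℝ] X, L A = (Φ t τ₀).comp A := fun A => rfl
  have hvar := hVar t ht τ₀ ht0 η
  have key : (Φ t τ₀).comp (Dsol τ₀ t η)
      = ContinuousLinearMap.id ℝ X
        - ∫ s in τ₀..t, (Φ t s).comp ((DF s (sol s t η)).comp (Dsol s t η)) := by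
    rw [← hL, hvar, map_add, hL, hid1, cle_intervalIntegral]
    rw [intervalIntegral.integral_congr
      (g := fun r => (Φ t r).comp ((DF r (sol r t η)).comp (Dsol r t η)))
      (fun r hr => by
        have hr' : τ₀ ≤ r := by
          rw [Set.uIcc_of_ge ht'] at hr
          exact hr.1
        show L _ = _
        rw [hL, ← ContinuousLinearMap.comp_assoc, ← hΦcomp t ht τ₀ ht0 r hr'])]
    rw [intervalIntegral.integral_symm, sub_eq_add_neg]
  have keyDG : DG t η = (Φ t τ₀).comp (Dsol τ₀ t η) :=
    (hDGformula t ht η).trans key.symm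
  refine ⟨keyDG, ?_⟩
  obtain ⟨B, hB1, hB2⟩ := hDsolInv t ht τ₀ ht0 η
  have p1 : ∀ x : X, Dsol τ₀ t η (B x) = x := fun x => by
    have := ContinuousLinearMap.ext_iff.mp hB1 x
    simpa using this
  have p2 : ∀ x : X, B (Dsol τ₀ t η x) = x := fun x => by
    have := ContinuousLinearMap.ext_iff.mp hB2 x
    simpa using this
  have q1 : ∀ x : X, Φ t τ₀ (Φ τ₀ t x) = x := fun x => by
    have := ContinuousLinearMap.ext_iff.mp hid1 x
    simpa using this
  have q2 : ∀ x : X, Φ τ₀ t (Φ t τ₀ x) = x := fun x => by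
    have := ContinuousLinearMap.ext_iff.mp hid2 x
    simpa using this
  refine ⟨B.comp (Φ τ₀ t), ?_, ?_⟩
  · ext x
    simp [keyDG, p1, q1]
  · ext x
    simp [keyDG, q2, p2]
end
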